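/- arXiv:2602.13373 — 8 statements merged into one kernel-verified Lean document; each statement's English description precedes it below -/
import Mathlib

section
/- Let G be a compact topological group acting continuously by linear automorphisms on a finite-dimensional real vector space V. If v, w ∈ V satisfy P(v) = P(w) for every polynomial function P : V → ℝ that is invariant under the G-action (i.e. P(g·u) = P(u) for all g ∈ G and u ∈ V), then w lies in the G-orbit of v, i.e. there exists g ∈ G with w = g·v. -/
/-!
Suppose `w` is not in the orbit `G • v`. The two orbits are then disjoint compact sets, so by
Urysohn's lemma and Stone–Weierstrass there is a polynomial `Q` with `Q ≤ 1/3` on `G • v` and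
`Q ≥ 2/3` on `G • w`. Averaging `Q` over the normalized Haar measure (the Reynolds operator)
gives a `G`-invariant function with the same bounds, which is still polynomial: all translates
`Q ∘ ρ g` lie in the finite-dimensional space of polynomials of degree at most `deg Q`, and the
Bochner integral of a continuous curve in a finite-dimensional space stays in that space. This
invariant separates `v` from `w`.
-/

open MeasureTheory

section PolynomialFunctions

variable (K V : Type*) [Field K] [AddCommGroup V] [Module K V]

def polynomialFunctionsDegreeLE (d : ℕ) : Submodule K (V → K) :=
  Submodule.span K (insert 1 {f : V → K | IsLinearMap K f}) ^ d

variable {K V}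

theorem polynomialFunctionsDegreeLE_le_adjoin (d : ℕ) :
    polynomialFunctionsDegreeLE K V d ≤
      Subalgebra.toSubmodule (Algebra.adjoin K {f : V → K | IsLinearMap K f}) := by
  intro f hf
  refine Submodule.pow_induction_on_left _ (fun r => Subalgebra.algebraMap_mem _ r)
    (fun _ _ => Subalgebra.add_mem _) (fun m hm f hf => ?_) hf
  refine Subalgebra.mul_mem _ ?_ hf
  refine (Submodule.span_le (p := Subalgebra.toSubmodule
    (Algebra.adjoin K {f : V → K | IsLinearMap K f}))).2 ?_ hm
  rintro g (rfl | hg)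
  · exact Subalgebra.one_mem _
  · exact Algebra.subset_adjoin hg

theorem polynomialFunctionsDegreeLE_mono {d e : ℕ} (h : d ≤ e) :
    polynomialFunctionsDegreeLE K V d ≤ polynomialFunctionsDegreeLE K V e :=
  pow_le_pow_right' (Submodule.one_le.2 (Submodule.subset_span (Set.mem_insert 1 _))) h

theorem exists_mem_polynomialFunctionsDegreeLE {f : V → K}
    (hf : f ∈ Algebra.adjoin K {f : V → K | IsLinearMap K f}) :
    ∃ d, f ∈ polynomialFunctionsDegreeLE K V d := by
  induction hf using Algebra.adjoin_induction with
  | mem f hf =>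
    refine ⟨1, ?_⟩
    rw [polynomialFunctionsDegreeLE, pow_one]
    exact Submodule.subset_span (Set.mem_insert_of_mem 1 hf)
  | algebraMap r => exact ⟨0, Submodule.algebraMap_mem r⟩
  | add f g _ _ hf hg =>
    obtain ⟨d, hd⟩ := hf
    obtain ⟨e, he⟩ := hg
    exact ⟨max d e, add_mem (polynomialFunctionsDegreeLE_mono (le_max_left d e) hd)
      (polynomialFunctionsDegreeLE_mono (le_max_right d e) he)⟩
  | mul f g _ _ hf hg =>
    obtain ⟨d, hd⟩ := hf
    obtain ⟨e, he⟩ := hg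
    refine ⟨d + e, ?_⟩
    rw [polynomialFunctionsDegreeLE, pow_add]
    exact Submodule.mul_mem_mul hd he

instance finiteDimensional_polynomialFunctionsDegreeLE [FiniteDimensional K V] (d : ℕ) :
    FiniteDimensional K (polynomialFunctionsDegreeLE K V d) := by
  rw [← Submodule.fg_iff_finiteDimensional]
  refine Submodule.FG.pow ?_ d
  have hlin : {f : V → K | IsLinearMap K f} ⊆ LinearMap.range (LinearMap.ltoFun K V K K) :=
    fun f hf => ⟨IsLinearMap.mk' f hf, rfl⟩
  refine Submodule.FG.of_le ((Submodule.fg_span_singleton 1).sup ?_)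
    ((Submodule.span_insert 1 _).le.trans (sup_le_sup_left (Submodule.span_le.2 hlin) _))
  rw [LinearMap.range_eq_map]
  exact Module.Finite.fg_top.map _

theorem comp_mem_polynomialFunctionsDegreeLE {W : Type*} [AddCommGroup W] [Module K W]
    (T : W →ₗ[K] V) {f : V → K} {d : ℕ} (hf : f ∈ polynomialFunctionsDegreeLE K V d) :
    f ∘ T ∈ polynomialFunctionsDegreeLE K W d := by
  let precomp : (V → K) →ₐ[K] (W → K) := AlgHom.pi fun w => Pi.evalAlgHom K (fun _ => K) (T w)
  have hmap : Submodule.map precomp.toLinearMap (polynomialFunctionsDegreeLE K V d) ≤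
      polynomialFunctionsDegreeLE K W d := by
    rw [polynomialFunctionsDegreeLE, Submodule.map_pow]
    refine pow_le_pow_left' ?_ d
    rw [Submodule.map_span_le]
    rintro g (rfl | hg)
    · exact Submodule.subset_span (Set.mem_insert _ _)
    · exact Submodule.subset_span (Set.mem_insert_of_mem _ ((IsLinearMap.mk' g hg ∘ₗ T).isLinear))
  exact hmap ⟨f, hf, rfl⟩

end PolynomialFunctions

theorem integral_apply_mem_of_finiteDimensional {G X : Type*} [TopologicalSpace G]
    [CompactSpace G] [MeasurableSpace G] [OpensMeasurableSpace G] (μ : Measure G)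
    [IsFiniteMeasure μ] (N : Submodule ℝ (X → ℝ)) [FiniteDimensional ℝ N] {F : G → X → ℝ}
    (hFN : ∀ g, F g ∈ N) (hF : ∀ x, Continuous fun g => F g x) :
    (fun x => ∫ g, F g x ∂μ) ∈ N := by
  -- `N` is a finite-dimensional Hausdorff space in the topology of pointwise convergence.
  let E : N ≃L[ℝ] (Fin (Module.finrank ℝ N) → ℝ) :=
    (Module.finBasis ℝ N).equivFun.toContinuousLinearEquiv
  let φ : G → N := fun g => ⟨F g, hFN g⟩
  have hφ : Continuous φ := (continuous_pi hF).subtype_mk hFN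
  have hint : Integrable (fun g => E (φ g)) μ :=
    (E.continuous.comp hφ).integrable_of_hasCompactSupport (.of_compactSpace _)
  have key : (fun x => ∫ g, F g x ∂μ) = (E.symm (∫ g, E (φ g) ∂μ) : X → ℝ) := by
    funext x
    let ev : (Fin (Module.finrank ℝ N) → ℝ) →L[ℝ] ℝ :=
      (ContinuousLinearMap.proj x).comp (N.subtypeL.comp E.symm.toContinuousLinearMap)
    simpa [ev, φ] using ev.integral_comp_comm hint
  exact key ▸ (E.symm _).2

theorem integral_le_of_forall_le {α : Type*} [MeasurableSpace α] {μ : Measure α}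
    [IsProbabilityMeasure μ] {f : α → ℝ} (hf : Integrable f μ) {c : ℝ} (h : ∀ x, f x ≤ c) :
    ∫ x, f x ∂μ ≤ c :=
  (integral_mono hf (integrable_const c) h).trans_eq (by simp)

theorem le_integral_of_forall_le {α : Type*} [MeasurableSpace α] {μ : Measure α}
    [IsProbabilityMeasure μ] {f : α → ℝ} (hf : Integrable f μ) {c : ℝ} (h : ∀ x, c ≤ f x) :
    c ≤ ∫ x, f x ∂μ :=
  (integral_mono (integrable_const c) hf h).trans_eq' (by simp)

theorem exists_mem_adjoin_isLinearMap_near {V : Type*} [AddCommGroup V] [Module ℝ V]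
    [TopologicalSpace V] [SeparatingDual ℝ V] {K : Set V} (hK : IsCompact K) (f : C(V, ℝ))
    {ε : ℝ} (hε : 0 < ε) :
    ∃ Q : C(V, ℝ), ⇑Q ∈ Algebra.adjoin ℝ {f : V → ℝ | IsLinearMap ℝ f} ∧
      ∀ x ∈ K, |Q x - f x| < ε := by
  have : CompactSpace K := isCompact_iff_compactSpace.mp hK
  let res : C(V, ℝ) →ₐ[ℝ] C(K, ℝ) :=
    ContinuousMap.compRightAlgHom ℝ ℝ ⟨Subtype.val, continuous_subtype_val⟩
  let A : Subalgebra ℝ C(V, ℝ) :=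
    (Algebra.adjoin ℝ {f : V → ℝ | IsLinearMap ℝ f}).comap (ContinuousMap.coeFnAlgHom ℝ)
  have hsep : (A.map res).SeparatesPoints := by
    intro x y hxy
    obtain ⟨φ, hφ⟩ :=
      SeparatingDual.exists_separating_of_ne (R := ℝ) (Subtype.coe_injective.ne hxy)
    exact ⟨_, ⟨res φ, ⟨φ, Algebra.subset_adjoin φ.toLinearMap.isLinear, rfl⟩, rfl⟩, hφ⟩
  obtain ⟨⟨_, Q, hQ, rfl⟩, hnear⟩ :=
    ContinuousMap.exists_mem_subalgebra_near_continuousMap_of_separatesPoints (A.map res) hsep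
      (res f) ε hε
  refine ⟨Q, hQ, fun x hx => ?_⟩
  simpa [res] using (ContinuousMap.norm_coe_le_norm _ ⟨x, hx⟩).trans_lt hnear

theorem exists_mem_adjoin_isLinearMap_separating {V : Type*} [NormedAddCommGroup V]
    [NormedSpace ℝ V] {A B : Set V} (hA : IsCompact A) (hB : IsCompact B) (hAB : Disjoint A B) :
    ∃ Q : C(V, ℝ), ⇑Q ∈ Algebra.adjoin ℝ {f : V → ℝ | IsLinearMap ℝ f} ∧
      (∀ x ∈ A, Q x ≤ 1 / 3) ∧ ∀ x ∈ B, 2 / 3 ≤ Q x := by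
  obtain ⟨f, hfA, hfB, -⟩ := exists_continuous_zero_one_of_isClosed hA.isClosed hB.isClosed hAB
  obtain ⟨Q, hQ, hQf⟩ :=
    exists_mem_adjoin_isLinearMap_near (hA.union hB) f (by norm_num : (0 : ℝ) < 1 / 3)
  refine ⟨Q, hQ, fun x hx => ?_, fun x hx => ?_⟩
  · have := hQf x (Or.inl hx)
    rw [hfA hx, Pi.zero_apply, sub_zero] at this
    exact (abs_lt.1 this).2.le
  · have := hQf x (Or.inr hx)
    rw [hfB hx, Pi.one_apply] at this
    linarith [(abs_lt.1 this).1]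

theorem disjoint_range_apply_of_forall_ne {G R V : Type*} [Group G] [Semiring R] [AddCommMonoid V]
    [Module R V] (ρ : G →* (V ≃ₗ[R] V)) {v w : V} (h : ∀ g, ρ g v ≠ w) :
    Disjoint (Set.range fun g => ρ g v) (Set.range fun g => ρ g w) := by
  refine Set.disjoint_left.2 ?_
  rintro _ ⟨g, rfl⟩ ⟨g', hg'⟩
  exact h (g'⁻¹ * g) (by simp [← show ρ g' w = ρ g v from hg'])

section Reynolds

variable {G V : Type*} [Group G] [MeasurableSpace G] [AddCommGroup V] [Module ℝ V]

noncomputable def reynolds (μ : Measure G) (ρ : G →* (V ≃ₗ[ℝ] V)) (Q : V → ℝ) (u : V) : ℝ :=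
  ∫ g, Q (ρ g⁻¹ u) ∂μ

variable (μ : Measure G) (ρ : G →* (V ≃ₗ[ℝ] V))

theorem reynolds_apply_apply [MeasurableMul G] [μ.IsMulLeftInvariant] (Q : V → ℝ) (g : G)
    (u : V) : reynolds μ ρ Q (ρ g u) = reynolds μ ρ Q u := by
  have h : ∀ g', ρ g'⁻¹ (ρ g u) = ρ (g⁻¹ * g')⁻¹ u := fun g' => by simp [mul_inv_rev]
  simp_rw [reynolds, h]
  exact integral_mul_left_eq_self (fun g' => Q (ρ g'⁻¹ u)) g⁻¹

theorem reynolds_mem_polynomialFunctionsDegreeLE [TopologicalSpace G] [CompactSpace G]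
    [OpensMeasurableSpace G] [IsFiniteMeasure μ] [FiniteDimensional ℝ V]
    {Q : V → ℝ} (hQρ : ∀ u, Continuous fun g => Q (ρ g⁻¹ u)) {d : ℕ}
    (hQ : Q ∈ polynomialFunctionsDegreeLE ℝ V d) :
    reynolds μ ρ Q ∈ polynomialFunctionsDegreeLE ℝ V d :=
  integral_apply_mem_of_finiteDimensional μ _
    (fun g => comp_mem_polynomialFunctionsDegreeLE (ρ g⁻¹).toLinearMap hQ) hQρ

end Reynolds

/-- **Polynomial invariants of a compact group separate orbits of a real representation.**
If a compact topological group `G` acts continuously by linear automorphisms on a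
finite-dimensional real vector space `V`, and `v, w ∈ V` agree on every `G`-invariant
polynomial function (an element of the algebra generated by linear functionals),
then `w` lies in the `G`-orbit of `v`. -/
theorem polynomial_invariants_separate_orbits_real
    {G V : Type*} [Group G] [TopologicalSpace G] [IsTopologicalGroup G] [CompactSpace G]
    [NormedAddCommGroup V] [NormedSpace ℝ V] [FiniteDimensional ℝ V]
    (ρ : G →* (V ≃ₗ[ℝ] V))
    (hcont : Continuous fun p : G × V => ρ p.1 p.2)
    (v w : V)
    (hsep : ∀ P : V → ℝ, P ∈ Algebra.adjoin ℝ {f : V → ℝ | IsLinearMap ℝ f} →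
      (∀ (g : G) (u : V), P (ρ g u) = P u) → P v = P w) :
    ∃ g : G, (ρ g) v = w := by
  by_contra! hne
  have hact : ∀ u, Continuous fun g => ρ g u :=
    fun u => hcont.comp (continuous_id.prodMk continuous_const)
  obtain ⟨Q, hQ, hQv, hQw⟩ :=
    exists_mem_adjoin_isLinearMap_separating (isCompact_range (hact v))
      (isCompact_range (hact w)) (disjoint_range_apply_of_forall_ne ρ hne)
  obtain ⟨d, hQd⟩ := exists_mem_polynomialFunctionsDegreeLE hQ
  let : MeasurableSpace G := borel G
  have : BorelSpace G := ⟨rfl⟩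
  let μ := Measure.haarMeasure (⊤ : TopologicalSpace.PositiveCompacts G)
  have : IsProbabilityMeasure μ := ⟨Measure.haarMeasure_self⟩
  have hQρ : ∀ u, Continuous fun g => Q (ρ g⁻¹ u) :=
    fun u => Q.continuous.comp ((hact u).comp continuous_inv)
  have hint : ∀ u, Integrable (fun g => Q (ρ g⁻¹ u)) μ :=
    fun u => (hQρ u).integrable_of_hasCompactSupport (.of_compactSpace _)
  have hP := polynomialFunctionsDegreeLE_le_adjoin d
    (reynolds_mem_polynomialFunctionsDegreeLE μ ρ hQρ hQd)
  have hPvw := hsep _ hP (reynolds_apply_apply μ ρ Q)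
  have hPv : reynolds μ ρ Q v ≤ 1 / 3 :=
    integral_le_of_forall_le (hint v) fun g => hQv _ ⟨g⁻¹, rfl⟩
  have hPw : 2 / 3 ≤ reynolds μ ρ Q w :=
    le_integral_of_forall_le (hint w) fun g => hQw _ ⟨g⁻¹, rfl⟩
  linarith
end

section
/- Let G be a compact topological group acting continuously by linear automorphisms on ℂⁿ. If v, w ∈ ℂⁿ satisfy P(v, conj(v)) = P(w, conj(w)) for every polynomial P in 2n complex variables x₁,…,xₙ, x̄₁,…,x̄ₙ such that the function u ↦ P(u, conj(u)) is G-invariant, then w lies in the G-orbit of v. In particular, the unitary invariants of any complex representation of a compact group separate orbits. -/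
/-!
If `w ∉ G • v`, the orbits `G • v` and `G • w` are disjoint compact sets, so a continuous function
is `0` on the first and `1` on the second. By Stone–Weierstrass it is approximated within `1/3` on
both orbits by a polynomial `Q` in `x` and `x̄`. Averaging `u ↦ Q(g • u)` over a right-invariant
Haar probability measure gives a `G`-invariant function that is still a polynomial in `x` and `x̄`:
the substituted polynomials `Q(g • ·)` have degree at most `deg Q` and coefficients continuous in
`g`, so one may integrate coefficientwise. This invariant polynomial is within `1/3` of `0` at `v`
and of `1` at `w`, so it separates them.
-/

open MeasureTheory MvPolynomial Matrix

namespace MvPolynomial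

variable {σ τ R : Type*} [CommSemiring R]

theorem totalDegree_bind₁_le_of_totalDegree_le_one {f : σ → MvPolynomial τ R}
    (hf : ∀ s, (f s).totalDegree ≤ 1) (p : MvPolynomial σ R) :
    (bind₁ f p).totalDegree ≤ p.totalDegree := by
  conv_lhs => rw [p.as_sum]
  rw [map_sum]
  refine (totalDegree_finsetSum _ _).trans (Finset.sup_le fun m hm => ?_)
  rw [bind₁_monomial]
  calc (C (coeff m p) * ∏ s ∈ m.support, f s ^ m s).totalDegree
      ≤ ∑ s ∈ m.support, (f s ^ m s).totalDegree :=
        (totalDegree_mul _ _).trans <| by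
          rw [totalDegree_C, zero_add]
          exact totalDegree_finsetProd _ _
    _ ≤ ∑ s ∈ m.support, m s :=
        Finset.sum_le_sum fun s _ => (totalDegree_pow _ _).trans (by nlinarith [hf s])
    _ ≤ p.totalDegree := le_totalDegree hm

theorem continuous_coeff_bind₁ {X : Type*} [TopologicalSpace X] [TopologicalSpace R]
    [IsTopologicalSemiring R] {f : X → σ → MvPolynomial τ R}
    (hf : ∀ s m, Continuous fun x => coeff m (f x s)) (p : MvPolynomial σ R) (m : τ →₀ ℕ) :
    Continuous fun x => coeff m (bind₁ (f x) p) := by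
  classical
  induction p using MvPolynomial.induction_on generalizing m with
  | C a => simpa only [bind₁_C_right] using continuous_const
  | add p q hp hq =>
    simp only [map_add, coeff_add]
    exact (hp m).add (hq m)
  | mul_X p s hp =>
    simp only [map_mul, bind₁_X_right, coeff_mul]
    exact continuous_finsetSum _ fun k _ => (hp k.1).mul (hf s k.2)

theorem exists_eval_eq_integral [Finite σ] {X 𝕜 : Type*} [RCLike 𝕜] [MeasurableSpace X]
    {μ : Measure X} {F : X → MvPolynomial σ 𝕜} {d : ℕ} (hF : ∀ x, (F x).totalDegree ≤ d)
    (hint : ∀ m, Integrable (fun x => coeff m (F x)) μ) :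
    ∃ P : MvPolynomial σ 𝕜, ∀ y, eval y P = ∫ x, eval y (F x) ∂μ := by
  set S := (Finsupp.finite_of_degree_le (σ := σ) d).toFinset
  have hS : ∀ x, (F x).support ⊆ S := fun x m hm => by
    simpa [S, Finsupp.degree_apply, Finsupp.sum] using (le_totalDegree hm).trans (hF x)
  refine ⟨∑ m ∈ S, monomial m (∫ x, coeff m (F x) ∂μ), fun y => ?_⟩
  have heval : ∀ x, eval y (F x) = ∑ m ∈ S, coeff m (F x) * ∏ s ∈ m.support, y s ^ m s :=
    fun x => (eval_eq _ _).trans <|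
      Finset.sum_subset (hS x) fun m _ hm => by rw [notMem_support_iff.mp hm, zero_mul]
  simp only [heval, map_sum, eval_monomial, Finsupp.prod]
  rw [integral_finsetSum _ fun m _ => (hint m).mul_const _]
  exact Finset.sum_congr rfl fun m _ => (integral_mul_const _ _).symm

end MvPolynomial

theorem norm_integral_sub_le_of_norm_sub_le {α E : Type*} [MeasurableSpace α]
    [NormedAddCommGroup E] [NormedSpace ℝ E] [CompleteSpace E] {μ : Measure α}
    [IsProbabilityMeasure μ] {f : α → E} (hf : Integrable f μ) {c : E} {ε : ℝ}
    (h : ∀ x, ‖f x - c‖ ≤ ε) : ‖∫ x, f x ∂μ - c‖ ≤ ε := by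
  have := norm_integral_le_of_norm_le_const (μ := μ) (Filter.Eventually.of_forall h)
  rwa [integral_sub hf (integrable_const c), integral_const, probReal_univ, one_smul,
    mul_one] at this

theorem Continuous.integrable_of_compactSpace {α E : Type*} [TopologicalSpace α] [CompactSpace α]
    [MeasurableSpace α] [OpensMeasurableSpace α] [NormedAddCommGroup E] {μ : Measure α}
    [IsFiniteMeasure μ] {f : α → E} (hf : Continuous f) : Integrable f μ :=
  hf.integrable_of_hasCompactSupport (.of_compactSpace f)

instance isProbabilityMeasure_inv_haarMeasure_top {G : Type*} [Group G] [TopologicalSpace G]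
    [IsTopologicalGroup G] [CompactSpace G] [MeasurableSpace G] [BorelSpace G] :
    IsProbabilityMeasure (Measure.haarMeasure (⊤ : TopologicalSpace.PositiveCompacts G)).inv :=
  ⟨by rw [Measure.inv_apply, Set.inv_univ, ← TopologicalSpace.PositiveCompacts.coe_top,
    Measure.haarMeasure_self]⟩

def withConj {ι : Type*} (u : ι → ℂ) : ι ⊕ ι → ℂ :=
  Sum.elim u fun i => starRingEnd ℂ (u i)

theorem continuous_withConj {ι : Type*} : Continuous (withConj (ι := ι)) := by
  refine continuous_pi fun s => ?_
  cases s with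
  | inl i => exact continuous_apply i
  | inr i => exact Complex.continuous_conj.comp (continuous_apply i)

section StoneWeierstrass

variable {ι : Type*} (K : Set (ι → ℂ))

def coordOn (i : ι) : C(K, ℂ) :=
  ⟨fun x => (x : ι → ℂ) i, (continuous_apply i).comp continuous_subtype_val⟩

variable {K}

theorem exists_eval_withConj_of_mem_adjoin_coordOn {F : C(K, ℂ)}
    (hF : F ∈ StarAlgebra.adjoin ℂ (Set.range (coordOn K))) :
    ∃ Q : MvPolynomial (ι ⊕ ι) ℂ, ∀ x : K, F x = eval (withConj x) Q := by
  have hgen : Set.range (coordOn K) ∪ star (Set.range (coordOn K)) =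
      Set.range (Sum.elim (coordOn K) (star (coordOn K))) := by
    ext F
    simp only [Set.Sum.elim_range, Set.mem_union, Set.mem_star, Set.mem_range, Pi.star_apply]
    exact or_congr_right (exists_congr fun i => by rw [star_eq_iff_star_eq, eq_comm])
  rw [← StarSubalgebra.mem_toSubalgebra, StarAlgebra.adjoin_toSubalgebra, hgen,
    Algebra.adjoin_range_eq_range_aeval] at hF
  obtain ⟨Q, rfl⟩ := hF
  refine ⟨Q, fun x => ?_⟩
  have hx : (fun s => ContinuousMap.evalAlgHom ℂ ℂ x (Sum.elim (coordOn K) (star (coordOn K)) s)) =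
      withConj (x : ι → ℂ) := by
    funext s; cases s <;> rfl
  change ContinuousMap.evalAlgHom ℂ ℂ x (aeval _ Q) = _
  rw [← AlgHom.comp_apply, comp_aeval, hx]
  rfl

theorem exists_norm_eval_withConj_sub_lt (hK : IsCompact K) {f : (ι → ℂ) → ℂ}
    (hf : Continuous f) {ε : ℝ} (hε : 0 < ε) :
    ∃ Q : MvPolynomial (ι ⊕ ι) ℂ, ∀ x ∈ K, ‖eval (withConj x) Q - f x‖ < ε := by
  have : CompactSpace K := isCompact_iff_compactSpace.mp hK
  let A := StarAlgebra.adjoin ℂ (Set.range (coordOn K))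
  have hsep : A.SeparatesPoints := by
    rintro x y hxy
    obtain ⟨i, hi⟩ := Function.ne_iff.mp (Subtype.coe_ne_coe.mpr hxy)
    exact ⟨coordOn K i, ⟨coordOn K i, StarAlgebra.subset_adjoin ℂ _ ⟨i, rfl⟩, rfl⟩, hi⟩
  let fK : C(K, ℂ) := ⟨fun x => f x, by fun_prop⟩
  have hfK : fK ∈ A.topologicalClosure := by
    rw [ContinuousMap.starSubalgebra_topologicalClosure_eq_top_of_separatesPoints A hsep]
    trivial
  obtain ⟨F, hFA, hF⟩ := Metric.mem_closure_iff.mp hfK ε hε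
  obtain ⟨Q, hQ⟩ := exists_eval_withConj_of_mem_adjoin_coordOn hFA
  refine ⟨Q, fun x hx => ?_⟩
  rw [← hQ ⟨x, hx⟩, ← dist_eq_norm, dist_comm]
  exact (ContinuousMap.dist_apply_le_dist (f := fK) (g := F) ⟨x, hx⟩).trans_lt hF

end StoneWeierstrass

section LinearSubstitution

variable {ι : Type*} [Fintype ι]

noncomputable def conjLinearSubst (M : Matrix ι ι ℂ) : ι ⊕ ι → MvPolynomial (ι ⊕ ι) ℂ :=
  Sum.elim (fun i => ∑ j, C (M i j) * X (Sum.inl j))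
    fun i => ∑ j, C (starRingEnd ℂ (M i j)) * X (Sum.inr j)

theorem eval_withConj_conjLinearSubst (M : Matrix ι ι ℂ) (u : ι → ℂ) :
    (fun s => eval (withConj u) (conjLinearSubst M s)) = withConj (M *ᵥ u) := by
  funext s
  cases s with
  | inl i => simp [conjLinearSubst, withConj, Matrix.mulVec, dotProduct]
  | inr i => simp [conjLinearSubst, withConj, Matrix.mulVec, dotProduct]

theorem eval_withConj_bind₁_conjLinearSubst (M : Matrix ι ι ℂ) (u : ι → ℂ)
    (Q : MvPolynomial (ι ⊕ ι) ℂ) :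
    eval (withConj u) (bind₁ (conjLinearSubst M) Q) = eval (withConj (M *ᵥ u)) Q := by
  rw [← eval_withConj_conjLinearSubst]
  exact eval₂Hom_bind₁ _ _ _ _

theorem totalDegree_conjLinearSubst_le (M : Matrix ι ι ℂ) (s : ι ⊕ ι) :
    (conjLinearSubst M s).totalDegree ≤ 1 := by
  cases s <;>
  · refine (totalDegree_finsetSum _ _).trans (Finset.sup_le fun j _ => ?_)
    refine (totalDegree_mul _ _).trans ?_
    simp [totalDegree_X, totalDegree_C]

theorem continuous_coeff_conjLinearSubst {X : Type*} [TopologicalSpace X] {M : X → Matrix ι ι ℂ}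
    (hM : Continuous M) (s : ι ⊕ ι) (m : ι ⊕ ι →₀ ℕ) :
    Continuous fun x => coeff m (conjLinearSubst (M x) s) := by
  cases s with
  | inl i =>
    simp only [conjLinearSubst, Sum.elim_inl, coeff_sum, coeff_C_mul]
    fun_prop
  | inr i =>
    simp only [conjLinearSubst, Sum.elim_inr, coeff_sum, coeff_C_mul]
    fun_prop

theorem LinearMap.continuous_toMatrix' {R X : Type*} [CommSemiring R] [TopologicalSpace R]
    [TopologicalSpace X] [DecidableEq ι] {A : X → (ι → R) →ₗ[R] (ι → R)}
    (hA : Continuous fun p : X × (ι → R) => A p.1 p.2) :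
    Continuous fun x => LinearMap.toMatrix' (A x) := by
  refine continuous_pi fun i => continuous_pi fun j => ?_
  simp only [LinearMap.toMatrix'_apply]
  exact (continuous_apply i).comp (hA.comp (continuous_id.prodMk continuous_const))

theorem exists_invariant_eval_withConj_eq_integral {G : Type*} [Group G] [TopologicalSpace G]
    [ContinuousMul G] [CompactSpace G] [MeasurableSpace G] [BorelSpace G] [DecidableEq ι]
    {ρ : G →* ((ι → ℂ) ≃ₗ[ℂ] (ι → ℂ))} (hcont : Continuous fun p : G × (ι → ℂ) => ρ p.1 p.2)
    (μ : Measure G) [IsFiniteMeasure μ] [μ.IsMulRightInvariant] (Q : MvPolynomial (ι ⊕ ι) ℂ) :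
    ∃ P : MvPolynomial (ι ⊕ ι) ℂ,
      (∀ g u, eval (withConj (ρ g u)) P = eval (withConj u) P) ∧
      ∀ u, eval (withConj u) P = ∫ g, eval (withConj (ρ g u)) Q ∂μ := by
  let M g := LinearMap.toMatrix' (ρ g : (ι → ℂ) →ₗ[ℂ] (ι → ℂ))
  have hM : Continuous M := LinearMap.continuous_toMatrix' hcont
  obtain ⟨P, hP⟩ := exists_eval_eq_integral (μ := μ)
    (F := fun g => bind₁ (conjLinearSubst (M g)) Q)
    (fun g => totalDegree_bind₁_le_of_totalDegree_le_one (totalDegree_conjLinearSubst_le _) Q)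
    fun m => (continuous_coeff_bind₁ (continuous_coeff_conjLinearSubst hM) Q m)
      |>.integrable_of_compactSpace
  have hPu : ∀ u, eval (withConj u) P = ∫ g, eval (withConj (ρ g u)) Q ∂μ := fun u => by
    simp only [hP, eval_withConj_bind₁_conjLinearSubst, M, LinearMap.toMatrix'_mulVec,
      LinearEquiv.coe_coe]
  refine ⟨P, fun g₀ u => ?_, hPu⟩
  rw [hPu, hPu]
  simp only [← LinearEquiv.mul_apply, ← map_mul]
  exact integral_mul_right_eq_self (fun g => eval (withConj (ρ g u)) Q) g₀

end LinearSubstitution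

theorem disjoint_range_apply_of_forall_apply_ne {G R E : Type*} [Group G] [Semiring R]
    [AddCommMonoid E] [Module R E] (ρ : G →* (E ≃ₗ[R] E)) {v w : E} (h : ∀ g, ρ g v ≠ w) :
    Disjoint (Set.range fun g => ρ g v) (Set.range fun g => ρ g w) := by
  refine Set.disjoint_left.mpr ?_
  rintro _ ⟨g, rfl⟩ ⟨g', hg'⟩
  refine h (g'⁻¹ * g) ?_
  rw [map_mul, LinearEquiv.mul_apply, ← show ρ g' w = ρ g v from hg', ← LinearEquiv.mul_apply,
    ← map_mul, inv_mul_cancel, map_one]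
  rfl

/-- **Unitary invariants of a compact group separate orbits.**
If a compact topological group `G` acts continuously by linear automorphisms on `ℂⁿ`,
and `v, w` agree on every `G`-invariant polynomial in the variables `x₁,…,xₙ` and their
conjugates `x̄₁,…,x̄ₙ` (a "unitary invariant"), then `w` lies in the `G`-orbit of `v`. -/
theorem unitary_invariants_separate_orbits
    {G : Type*} [Group G] [TopologicalSpace G] [IsTopologicalGroup G] [CompactSpace G]
    {n : ℕ} (ρ : G →* ((Fin n → ℂ) ≃ₗ[ℂ] (Fin n → ℂ)))
    (hcont : Continuous fun p : G × (Fin n → ℂ) => ρ p.1 p.2)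
    (v w : Fin n → ℂ)
    (hsep : ∀ P : MvPolynomial (Fin n ⊕ Fin n) ℂ,
      (∀ (g : G) (u : Fin n → ℂ),
        MvPolynomial.eval (Sum.elim (ρ g u) fun i => starRingEnd ℂ (ρ g u i)) P =
          MvPolynomial.eval (Sum.elim u fun i => starRingEnd ℂ (u i)) P) →
      MvPolynomial.eval (Sum.elim v fun i => starRingEnd ℂ (v i)) P =
        MvPolynomial.eval (Sum.elim w fun i => starRingEnd ℂ (w i)) P) :
    ∃ g : G, (ρ g) v = w := by
  by_contra! hvw
  have horbit : ∀ u, Continuous fun g => ρ g u := fun u =>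
    hcont.comp (continuous_id.prodMk continuous_const)
  have hA := isCompact_range (horbit v)
  have hB := isCompact_range (horbit w)
  obtain ⟨f, hfA, hfB, -⟩ := exists_continuous_zero_one_of_isCompact hA hB.isClosed
    (disjoint_range_apply_of_forall_apply_ne ρ hvw)
  obtain ⟨Q, hQ⟩ := exists_norm_eval_withConj_sub_lt (hA.union hB)
    (Complex.continuous_ofReal.comp f.continuous) (by norm_num : (0 : ℝ) < 1 / 3)
  borelize G
  obtain ⟨P, hPinv, hPint⟩ := exists_invariant_eval_withConj_eq_integral hcont
    (Measure.haarMeasure (⊤ : TopologicalSpace.PositiveCompacts G)).inv Q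
  have hbound : ∀ u (c : ℂ), (∀ g, ‖eval (withConj (ρ g u)) Q - c‖ ≤ 1 / 3) →
      ‖eval (withConj u) P - c‖ ≤ 1 / 3 := fun u c hu => by
    rw [hPint]
    exact norm_integral_sub_le_of_norm_sub_le ((continuous_eval Q).comp
      (continuous_withConj.comp (horbit u))).integrable_of_compactSpace hu
  have hv := hbound v 0 fun g => by simpa [hfA ⟨g, rfl⟩] using (hQ _ (.inl ⟨g, rfl⟩)).le
  have hw := hbound w 1 fun g => by simpa [hfB ⟨g, rfl⟩] using (hQ _ (.inr ⟨g, rfl⟩)).le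
  rw [show eval (withConj v) P = eval (withConj w) P from hsep P hPinv, sub_zero] at hv
  have := norm_sub_le (eval (withConj w) P) (eval (withConj w) P - 1)
  norm_num at this
  linarith
end

section
/- Let G be a finite group acting linearly on ℂⁿ. If v, w ∈ ℂⁿ satisfy P(v) = P(w) for every polynomial P ∈ ℂ[x₁,…,xₙ] that is G-invariant (P(g·u) = P(u) for all g ∈ G and u ∈ ℂⁿ), then w lies in the G-orbit of v. -/
open MvPolynomial

/-- A linear factor vanishing at `q` and taking value `1` at `p` (when `p ≠ q`). -/
noncomputable def linfac {n : ℕ} (q p : Fin n → ℂ) : MvPolynomial (Fin n) ℂ :=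
  if h : ∃ i, p i ≠ q i then
    MvPolynomial.C (p h.choose - q h.choose)⁻¹ *
      (MvPolynomial.X h.choose - MvPolynomial.C (q h.choose))
  else 1

lemma eval_linfac_self {n : ℕ} {q p : Fin n → ℂ} (h : p ≠ q) :
    MvPolynomial.eval p (linfac q p) = 1 := by
  have h' : ∃ i, p i ≠ q i := Function.ne_iff.mp h
  simp only [linfac, dif_pos h']
  have hne : p h'.choose - q h'.choose ≠ 0 := sub_ne_zero.mpr h'.choose_spec
  simp [inv_mul_cancel₀ hne]

lemma eval_linfac_root {n : ℕ} {q p : Fin n → ℂ} (h : p ≠ q) :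
    MvPolynomial.eval q (linfac q p) = 0 := by
  have h' : ∃ i, p i ≠ q i := Function.ne_iff.mp h
  simp [linfac, dif_pos h']

/-- Indicator polynomial for `p` relative to `S`. -/
noncomputable def indic {n : ℕ} (S : Finset (Fin n → ℂ)) (p : Fin n → ℂ) :
    MvPolynomial (Fin n) ℂ :=
  ∏ q ∈ S.erase p, linfac q p

lemma eval_indic_self {n : ℕ} (S : Finset (Fin n → ℂ)) (p : Fin n → ℂ) :
    MvPolynomial.eval p (indic S p) = 1 := by
  rw [indic, map_prod]
  apply Finset.prod_eq_one
  intro q hq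
  exact eval_linfac_self (Finset.ne_of_mem_erase hq).symm ▸
    eval_linfac_self (fun e => (Finset.ne_of_mem_erase hq) e.symm)

lemma eval_indic_other {n : ℕ} (S : Finset (Fin n → ℂ)) (p : Fin n → ℂ)
    {q : Fin n → ℂ} (hq : q ∈ S) (hne : q ≠ p) :
    MvPolynomial.eval q (indic S p) = 0 := by
  rw [indic, map_prod]
  apply Finset.prod_eq_zero (Finset.mem_erase.mpr ⟨hne, hq⟩)
  exact eval_linfac_root (fun e => hne e.symm)

/-- Composition of a polynomial with a linear map. -/
noncomputable def compL {n : ℕ} (L : (Fin n → ℂ) →ₗ[ℂ] (Fin n → ℂ))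
    (Q : MvPolynomial (Fin n) ℂ) : MvPolynomial (Fin n) ℂ :=
  MvPolynomial.bind₁
    (fun i => ∑ j, MvPolynomial.C (L (Pi.single j 1) i) * MvPolynomial.X j) Q

lemma eval_compL {n : ℕ} (L : (Fin n → ℂ) →ₗ[ℂ] (Fin n → ℂ))
    (Q : MvPolynomial (Fin n) ℂ) (u : Fin n → ℂ) :
    MvPolynomial.eval u (compL L Q) = MvPolynomial.eval (L u) Q := by
  have h1 : MvPolynomial.eval u (compL L Q) =
      MvPolynomial.eval (fun i => MvPolynomial.eval u
        (∑ j, MvPolynomial.C (L (Pi.single j 1) i) * MvPolynomial.X j)) Q :=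
    MvPolynomial.eval₂Hom_bind₁ (RingHom.id ℂ) u _ Q
  have h2 : (fun i => MvPolynomial.eval u
      (∑ j, MvPolynomial.C (L (Pi.single j 1) i) * MvPolynomial.X j)) = L u := by
    funext i
    have hu : u = ∑ j, u j • (Pi.single j 1 : Fin n → ℂ) := by
      conv_lhs => rw [← Finset.univ_sum_single u]
      refine Finset.sum_congr rfl fun j _ => ?_
      funext k
      by_cases hk : k = j
      · subst hk; simp
      · simp [Pi.single_eq_of_ne hk]
    conv_rhs => rw [hu]
    simp [Finset.mul_sum, mul_comm]
  rw [h1, h2]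

/-- **Polynomial invariants of a finite group separate orbits on `ℂⁿ`.**
If a finite group `G` acts linearly on `ℂⁿ` and `v, w` agree on every `G`-invariant
polynomial `P ∈ ℂ[x₁,…,xₙ]`, then `w` lies in the `G`-orbit of `v`. -/
theorem polynomial_invariants_separate_orbits_finite_group
    {G : Type*} [Group G] [Finite G] {n : ℕ}
    (ρ : G →* ((Fin n → ℂ) ≃ₗ[ℂ] (Fin n → ℂ)))
    (v w : Fin n → ℂ)
    (hsep : ∀ P : MvPolynomial (Fin n) ℂ,
      (∀ (g : G) (u : Fin n → ℂ), MvPolynomial.eval (ρ g u) P = MvPolynomial.eval u P) →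
      MvPolynomial.eval v P = MvPolynomial.eval w P) :
    ∃ g : G, (ρ g) v = w := by
  classical
  have : Fintype G := Fintype.ofFinite G
  by_contra hcon
  push_neg at hcon
  have hmul : ∀ (g h : G) (u : Fin n → ℂ), ρ (g * h) u = ρ g (ρ h u) := by
    intro g h u
    rw [map_mul]
    rfl
  set A : Finset (Fin n → ℂ) := Finset.image (fun g => ρ g v) Finset.univ with hA
  set B : Finset (Fin n → ℂ) := Finset.image (fun g => ρ g w) Finset.univ with hB
  have hAB : ∀ a ∈ A, ∀ b ∈ B, a ≠ b := by
    intro a ha b hb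
    simp only [hA, hB, Finset.mem_image, Finset.mem_univ, true_and] at ha hb
    obtain ⟨g, rfl⟩ := ha; obtain ⟨h, rfl⟩ := hb
    intro he
    apply hcon (h⁻¹ * g)
    rw [hmul, he, ← hmul, inv_mul_cancel, map_one]
    rfl
  set S : Finset (Fin n → ℂ) := A ∪ B with hS
  set Q : MvPolynomial (Fin n) ℂ := ∑ b ∈ B, indic S b with hQ
  have hQA : ∀ a ∈ A, MvPolynomial.eval a Q = 0 := by
    intro a ha
    rw [hQ, map_sum]
    apply Finset.sum_eq_zero
    intro b hb
    exact eval_indic_other S b (Finset.mem_union_left _ ha) (hAB a ha b hb)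
  have hQB : ∀ b ∈ B, MvPolynomial.eval b Q = 1 := by
    intro b hb
    rw [hQ, map_sum]
    rw [Finset.sum_eq_single b]
    · exact eval_indic_self S b
    · intro b' hb' hne
      exact eval_indic_other S b' (Finset.mem_union_right _ hb) hne.symm
    · intro h; exact absurd hb h
  set P : MvPolynomial (Fin n) ℂ := ∑ g : G, compL (ρ g).toLinearMap Q with hP
  have hevalP : ∀ u, MvPolynomial.eval u P = ∑ g : G, MvPolynomial.eval (ρ g u) Q := by
    intro u
    rw [hP, map_sum]
    exact Finset.sum_congr rfl fun g _ => eval_compL _ _ _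
  have hinv : ∀ (g : G) (u : Fin n → ℂ),
      MvPolynomial.eval (ρ g u) P = MvPolynomial.eval u P := by
    intro g u
    rw [hevalP, hevalP]
    apply Fintype.sum_bijective (fun h => h * g) (Group.mulRight_bijective g)
    intro h
    rw [hmul]
  have hkey := hsep P hinv
  have hv : MvPolynomial.eval v P = 0 := by
    rw [hevalP]
    apply Finset.sum_eq_zero
    intro g _
    exact hQA _ (Finset.mem_image.mpr ⟨g, Finset.mem_univ g, rfl⟩)
  have hw : MvPolynomial.eval w P = (Fintype.card G : ℂ) := by
    rw [hevalP]
    rw [Finset.sum_congr rfl fun g _ =>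
      hQB _ (Finset.mem_image.mpr ⟨g, Finset.mem_univ g, rfl⟩)]
    simp [Finset.card_univ]
  rw [hv, hw] at hkey
  have : (Fintype.card G : ℂ) ≠ 0 := Nat.cast_ne_zero.mpr Fintype.card_ne_zero
  exact this hkey.symm
end

section
/- Let ζ₆ = exp(2πi/6) and let v = (v₁, v₂), w = (w₁, w₂) ∈ ℂ² with v₂ ≠ 0. If v₂³ = w₂³ and v₁²·conj(v₂) = w₁²·conj(w₂), then there exists k ∈ ℤ such that w₁ = ζ₆ᵏ·v₁ and w₂ = ζ₆²ᵏ·v₂; i.e., w lies in the ℤ₆-orbit of v for the action with weights 1 and 2. -/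
open Complex

lemma Z6_aux (ζ v₁ v₂ w₁ w₂ : ℂ) (hv₂ : v₂ ≠ 0) (hz3 : ζ ^ 3 = -1)
    (hu : ζ * starRingEnd ℂ ζ = 1) (j : ℕ) (hw2 : w₂ = ζ ^ (2 * j) * v₂)
    (h2 : v₁ ^ 2 * starRingEnd ℂ v₂ = w₁ ^ 2 * starRingEnd ℂ w₂) :
    ∃ k : ℤ, w₁ = ζ ^ k * v₁ ∧ w₂ = ζ ^ (2 * k) * v₂ := by
  have hcv : starRingEnd ℂ v₂ ≠ 0 := by
    simpa using hv₂
  rw [hw2, map_mul, map_pow] at h2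
  have hpow : ζ ^ (2 * j) * (starRingEnd ℂ ζ) ^ (2 * j) = 1 := by
    rw [← mul_pow, hu, one_pow]
  have h3 : (ζ ^ (2 * j) * v₁ ^ 2) * starRingEnd ℂ v₂ = w₁ ^ 2 * starRingEnd ℂ v₂ := by
    linear_combination ζ ^ (2 * j) * h2 + w₁ ^ 2 * starRingEnd ℂ v₂ * hpow
  have h2' : ζ ^ (2 * j) * v₁ ^ 2 = w₁ ^ 2 := mul_right_cancel₀ hcv h3
  have hfac : (w₁ - ζ ^ j * v₁) * (w₁ + ζ ^ j * v₁) = 0 := by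
    linear_combination -h2'
  have hz6 : ζ ^ 6 = 1 := by
    have : ζ ^ 6 = (ζ ^ 3) ^ 2 := by ring
    rw [this, hz3]; ring
  rcases mul_eq_zero.1 hfac with h | h
  · refine ⟨j, ?_, ?_⟩
    · rw [zpow_natCast]; linear_combination h
    · rw [show (2 * (j:ℤ)) = ((2*j : ℕ) : ℤ) by push_cast; ring, zpow_natCast]
      exact hw2
  · refine ⟨(j : ℤ) + 3, ?_, ?_⟩
    · rw [show ((j:ℤ) + 3) = ((j + 3 : ℕ) : ℤ) by push_cast; ring, zpow_natCast, pow_add]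
      linear_combination h - v₁ * ζ ^ j * hz3
    · rw [show (2 * ((j:ℤ) + 3)) = ((2*j + 6 : ℕ) : ℤ) by push_cast; ring, zpow_natCast, pow_add]
      rw [hz6, mul_one]
      exact hw2

/-- **Cubic invariants separate generic `ℤ₆`-orbits for the action on `ℂ²` with
weights 1 and 2.** If `v₂ ≠ 0`, `v₂³ = w₂³` and `v₁²·conj v₂ = w₁²·conj w₂`, then
`(w₁, w₂) = (ζ₆ᵏ v₁, ζ₆²ᵏ v₂)` for some integer `k`, where `ζ₆ = exp(2πi/6)`. -/
theorem Z6_orbit_separation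
    (v₁ v₂ w₁ w₂ : ℂ) (hv₂ : v₂ ≠ 0)
    (h1 : v₂ ^ 3 = w₂ ^ 3)
    (h2 : v₁ ^ 2 * starRingEnd ℂ v₂ = w₁ ^ 2 * starRingEnd ℂ w₂) :
    ∃ k : ℤ, w₁ = Complex.exp (2 * (Real.pi : ℂ) * Complex.I / 6) ^ k * v₁ ∧
      w₂ = Complex.exp (2 * (Real.pi : ℂ) * Complex.I / 6) ^ (2 * k) * v₂ := by
  set ζ : ℂ := Complex.exp (2 * (Real.pi : ℂ) * Complex.I / 6) with hζdef
  have hζ : ζ = 1 / 2 + ((Real.sqrt 3 / 2 : ℝ) : ℂ) * Complex.I := by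
    rw [hζdef, show 2 * (Real.pi : ℂ) * Complex.I / 6 = ((Real.pi / 3 : ℝ) : ℂ) * Complex.I by
      push_cast; ring, Complex.exp_mul_I, ← Complex.ofReal_cos, ← Complex.ofReal_sin,
      Real.cos_pi_div_three, Real.sin_pi_div_three]
    push_cast; ring
  have hs : ((Real.sqrt 3 : ℝ) : ℂ) ^ 2 = 3 := by
    norm_cast
    exact Real.sq_sqrt (by norm_num)
  have hquad : ζ ^ 2 - ζ + 1 = 0 := by
    rw [hζ]
    push_cast
    linear_combination (Complex.I ^ 2 / 4) * hs + (3 / 4 : ℂ) * Complex.I_sq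
  have hz3 : ζ ^ 3 = -1 := by linear_combination (ζ + 1) * hquad
  have hz6 : ζ ^ 6 = 1 := by
    have : ζ ^ 6 = (ζ ^ 3) ^ 2 := by ring
    rw [this, hz3]; ring
  have hsum : ζ ^ 4 + ζ ^ 2 + 1 = 0 := by
    linear_combination (ζ ^ 2 + ζ + 1) * hquad
  have hu : ζ * starRingEnd ℂ ζ = 1 := by
    rw [hζ]
    simp only [map_add, map_mul, map_div₀, Complex.conj_I, Complex.conj_ofReal, map_one,
      map_ofNat]
    push_cast
    linear_combination (-Complex.I ^ 2 / 4) * hs - (3 / 4 : ℂ) * Complex.I_sq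
  have hfacw2 : (w₂ - v₂) * (w₂ - ζ ^ 2 * v₂) * (w₂ - ζ ^ 4 * v₂) = 0 := by
    linear_combination (-1 : ℂ) * h1 + (v₂ ^ 2 * w₂ - v₂ * w₂ ^ 2) * hsum +
      (v₂ ^ 2 * w₂ - v₂ ^ 3) * hz6
  rcases mul_eq_zero.1 hfacw2 with h | h
  · rcases mul_eq_zero.1 h with h | h
    · exact Z6_aux ζ v₁ v₂ w₁ w₂ hv₂ hz3 hu 0 (by rw [sub_eq_zero] at h; simpa using h) h2
    · exact Z6_aux ζ v₁ v₂ w₁ w₂ hv₂ hz3 hu 1 (by rw [sub_eq_zero] at h; simpa using h) h2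
  · exact Z6_aux ζ v₁ v₂ w₁ w₂ hv₂ hz3 hu 2 (by rw [sub_eq_zero] at h; simpa using h) h2
end

section
/- Let n ≥ 1, ζ = exp(2πi/(3n)), and let v = (v₁,…,vₙ), w = (w₁,…,wₙ) ∈ ℂⁿ with vₖ ≠ 0 for all 1 ≤ k ≤ n. Suppose |w₁| = |v₁|, w₁·wₖ·conj(w_{k+1}) = v₁·vₖ·conj(v_{k+1}) for all 1 ≤ k ≤ n−1, and wₙ³ = vₙ³. Then there exists θ ∈ ℂ with θ^{3n} = 1 such that wₖ = θᵏ·vₖ for all 1 ≤ k ≤ n; i.e., w lies in the ℤ_{3n}-orbit of v. In particular, degree-three unitary invariants separate generic orbits of this action. -/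
/-!
Put `θ = w₁ / v₁`, a unimodular number since `|w₁| = |v₁|`. If `wₖ = θᵏ vₖ`, the invariant
`w₁ wₖ conj(w_{k+1}) = v₁ vₖ conj(v_{k+1})` becomes `θ^{k+1} conj(w_{k+1}) = conj(v_{k+1})`, and
`conj θ = θ⁻¹` turns this into `w_{k+1} = θ^{k+1} v_{k+1}`. Finally `wₙ³ = vₙ³` with `wₙ = θⁿ vₙ`
and `vₙ ≠ 0` gives `θ^{3n} = 1`.
-/

open ComplexConjugate

theorem pow_eq_one_of_mul_pow_eq_pow {M₀ : Type*} [CommMonoidWithZero M₀]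
    [IsCancelMulZero M₀] {u x : M₀} {m : ℕ} (hx : x ≠ 0) (h : (u * x) ^ m = x ^ m) : u ^ m = 1 := by
  rw [mul_pow] at h
  exact mul_right_cancel₀ (pow_ne_zero m hx) (h.trans (one_mul _).symm)

section

variable {𝕜 : Type*} [RCLike 𝕜]

theorem eq_mul_of_mul_conj_eq {u x y : 𝕜} (hu : ‖u‖ = 1) (h : u * conj x = conj y) :
    x = u * y := by
  have hu0 : u ≠ 0 := norm_ne_zero_iff.mp (hu ▸ one_ne_zero)
  have hx : conj x = conj u * conj y := by
    rw [← RCLike.inv_eq_conj hu, ← h, inv_mul_cancel_left₀ hu0]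
  simpa using congrArg conj hx

theorem eq_pow_succ_mul_of_mul_conj_chain {n : ℕ} (hn : 0 < n) {v w : Fin n → 𝕜} {θ : 𝕜}
    (hθ : ‖θ‖ = 1) (hv : ∀ k, v k ≠ 0) (h0 : w ⟨0, hn⟩ = θ * v ⟨0, hn⟩)
    (hchain : ∀ (k : ℕ) (hk : k + 1 < n),
      w ⟨0, hn⟩ * w ⟨k, Nat.lt_of_succ_lt hk⟩ * conj (w ⟨k + 1, hk⟩) =
        v ⟨0, hn⟩ * v ⟨k, Nat.lt_of_succ_lt hk⟩ * conj (v ⟨k + 1, hk⟩)) :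
    ∀ k : Fin n, w k = θ ^ ((k : ℕ) + 1) * v k := by
  rintro ⟨k, hk⟩
  induction k with
  | zero => simpa using h0
  | succ k ih =>
    have hk' : k < n := by omega
    apply eq_mul_of_mul_conj_eq (by rw [norm_pow, hθ, one_pow])
    apply mul_left_cancel₀ (mul_ne_zero (hv ⟨0, hn⟩) (hv ⟨k, hk'⟩))
    calc v ⟨0, hn⟩ * v ⟨k, hk'⟩ * (θ ^ (k + 1 + 1) * conj (w ⟨k + 1, hk⟩))
        = w ⟨0, hn⟩ * w ⟨k, hk'⟩ * conj (w ⟨k + 1, hk⟩) := by rw [h0, ih hk']; ring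
      _ = v ⟨0, hn⟩ * v ⟨k, hk'⟩ * conj (v ⟨k + 1, hk⟩) := hchain k hk

end

/-- **Degree-three unitary invariants separate generic orbits of `ℤ_{3n}` acting on
`ℂⁿ` with weights `1,…,n`.** (Vectors are 0-indexed: `v ⟨k-1,_⟩` is the mathematical `vₖ`.)
If all coordinates of `v` are nonzero, `|w₁| = |v₁|`, the chain of cubic unitary invariants
`w₁ wₖ conj(w_{k+1}) = v₁ vₖ conj(v_{k+1})` holds for `1 ≤ k ≤ n-1`, and `wₙ³ = vₙ³`,
then `wₖ = θᵏ vₖ` for all `k`, for some `θ` with `θ^{3n} = 1`. -/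
theorem Z3n_orbit_separation
    {n : ℕ} (hn : 1 ≤ n) (v w : Fin n → ℂ)
    (hv : ∀ k, v k ≠ 0)
    (h0 : ‖w ⟨0, by omega⟩‖ = ‖v ⟨0, by omega⟩‖)
    (hchain : ∀ (k : ℕ) (hk : k + 1 < n),
      w ⟨0, by omega⟩ * w ⟨k, by omega⟩ * starRingEnd ℂ (w ⟨k + 1, hk⟩) =
        v ⟨0, by omega⟩ * v ⟨k, by omega⟩ * starRingEnd ℂ (v ⟨k + 1, hk⟩))
    (hlast : w ⟨n - 1, by omega⟩ ^ 3 = v ⟨n - 1, by omega⟩ ^ 3) :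
    ∃ θ : ℂ, θ ^ (3 * n) = 1 ∧ ∀ k : Fin n, w k = θ ^ ((k : ℕ) + 1) * v k := by
  have hv0 := hv ⟨0, by omega⟩
  set θ := w ⟨0, by omega⟩ / v ⟨0, by omega⟩
  have hθ : ‖θ‖ = 1 := by rw [norm_div, h0, div_self (norm_ne_zero_iff.mpr hv0)]
  have hw := eq_pow_succ_mul_of_mul_conj_chain (by omega) hθ hv (div_mul_cancel₀ _ hv0).symm hchain
  refine ⟨θ, ?_, hw⟩
  have hn' : n - 1 + 1 = n := by omega
  rw [pow_mul']
  apply pow_eq_one_of_mul_pow_eq_pow (hv ⟨n - 1, by omega⟩)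
  rw [← hlast, hw, Fin.val_mk, hn']
end

section
/- Let N ≥ 1 and let x, x' : ZMod N → ℂ satisfy x̂[k] ≠ 0 for all k ∈ ZMod N. If x̂'[i]·x̂'[j]·conj(x̂'[i+j]) = x̂[i]·x̂[j]·conj(x̂[i+j]) for all i, j ∈ ZMod N, then there exists k₀ ∈ ZMod N such that x'_j = x_{j+k₀} for all j ∈ ZMod N. That is, the degree-three unitary bispectrum invariants separate the ℤ_N-orbits (under cyclic shift) of vectors with nonvanishing discrete Fourier transform. -/
open ZMod Complex

/-!
Write `a = x̂` and `a' = x̂'`. The bispectrum at `(0, 0)` gives `a' 0 |a' 0|² = a 0 |a 0|²`, hence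
`a' 0 = a 0`; at `(i, 0)` it then gives `|a' i| = |a i|`. Multiplying the bispectrum identity at
`(i, j)` by `a (i + j) a' (i + j)` and cancelling `|a (i + j)|² = |a' (i + j)|²` shows that `a' / a`
is a character of `ZMod N`, i.e. `k ↦ e^{2πi k₀ k / N}` for some `k₀`. That is exactly the factor
by which the shift by `k₀` multiplies the DFT, and the DFT is injective.
-/

section Bispectrum

variable {G : Type*} [AddMonoid G]

def bispectrum (a : G → ℂ) (i j : G) : ℂ := a i * a j * starRingEnd ℂ (a (i + j))

lemma bispectrum_zero_right (a : G → ℂ) (i : G) : bispectrum a i 0 = a 0 * normSq (a i) := by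
  rw [bispectrum, add_zero, mul_right_comm, mul_conj, mul_comm]

variable {a a' : G → ℂ}

lemma apply_zero_eq_of_bispectrum_eq (h0 : a 0 ≠ 0) (hb : bispectrum a' = bispectrum a) :
    a' 0 = a 0 := by
  have h := congrFun₂ hb 0 0
  rw [bispectrum_zero_right, bispectrum_zero_right] at h
  have hnorm : ‖a' 0‖ = ‖a 0‖ := by
    have h3 : ‖a' 0‖ ^ 3 = ‖a 0‖ ^ 3 := by
      simpa [normSq_eq_norm_sq, pow_succ'] using congrArg (‖·‖) h
    exact (pow_left_inj₀ (norm_nonneg _) (norm_nonneg _) three_ne_zero).1 h3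
  rw [normSq_eq_norm_sq, normSq_eq_norm_sq, hnorm] at h
  exact mul_right_cancel₀ (by simpa using h0) h

lemma normSq_eq_of_bispectrum_eq (h0 : a 0 ≠ 0) (hb : bispectrum a' = bispectrum a) (i : G) :
    normSq (a' i) = normSq (a i) := by
  have h := congrFun₂ hb i 0
  rw [bispectrum_zero_right, bispectrum_zero_right, apply_zero_eq_of_bispectrum_eq h0 hb] at h
  exact_mod_cast mul_left_cancel₀ h0 h

lemma mul_mul_apply_add_eq_of_bispectrum_eq (ha : ∀ i, a i ≠ 0)
    (hb : bispectrum a' = bispectrum a) (i j : G) :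
    a' i * a' j * a (i + j) = a i * a j * a' (i + j) := by
  have h := congrFun₂ hb i j
  have hsq :
      a' (i + j) * starRingEnd ℂ (a' (i + j)) = a (i + j) * starRingEnd ℂ (a (i + j)) := by
    rw [mul_conj, mul_conj, normSq_eq_of_bispectrum_eq (ha 0) hb]
  have hne : a (i + j) * starRingEnd ℂ (a (i + j)) ≠ 0 := by
    rw [mul_conj]; exact_mod_cast (normSq_pos.2 (ha _)).ne'
  apply mul_right_cancel₀ hne
  unfold bispectrum at h
  linear_combination (a (i + j) * a' (i + j)) * h - (a' i * a' j * a (i + j)) * hsq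

lemma exists_addChar_of_bispectrum_eq (ha : ∀ i, a i ≠ 0) (hb : bispectrum a' = bispectrum a) :
    ∃ ψ : AddChar G ℂ, ∀ i, a' i = ψ i * a i := by
  refine ⟨{ toFun := fun i ↦ a' i / a i, map_zero_eq_one' := ?_, map_add_eq_mul' := ?_ }, ?_⟩
  · simp [apply_zero_eq_of_bispectrum_eq (ha 0) hb, ha 0]
  · intro i j
    rw [div_mul_div_comm, div_eq_div_iff (ha _) (mul_ne_zero (ha _) (ha _))]
    linear_combination -(mul_mul_apply_add_eq_of_bispectrum_eq ha hb i j)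
  · intro i
    simp [div_mul_cancel₀ _ (ha i)]

end Bispectrum

namespace ZMod

variable {N : ℕ} [NeZero N]

lemma dft_comp_add_right {E : Type*} [AddCommGroup E] [Module ℂ E] (x : ZMod N → E)
    (k₀ k : ZMod N) :
    dft (fun j ↦ x (j + k₀)) k = stdAddChar (k₀ * k) • dft x k := by
  rw [dft_apply, dft_apply, Finset.smul_sum]
  refine Fintype.sum_equiv (Equiv.addRight k₀) _ _ fun j ↦ ?_
  rw [Equiv.coe_addRight, smul_smul, ← AddChar.map_add_eq_mul]
  congr 2
  ring

lemma exists_eq_mulShift_stdAddChar (ψ : AddChar (ZMod N) ℂ) :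
    ∃ k₀ : ZMod N, ψ = stdAddChar.mulShift k₀ :=
  ((Fintype.bijective_iff_injective_and_card _).2
    ⟨AddChar.to_mulShift_inj_of_isPrimitive (isPrimitive_stdAddChar N), by simp⟩).surjective ψ
    |>.imp fun _ ↦ Eq.symm

end ZMod

/-- **The bispectrum separates cyclic-shift orbits of vectors with nonvanishing DFT.**
If `x, x' : ZMod N → ℂ`, the DFT of `x` is everywhere nonzero, and the bispectra
`x̂'[i]·x̂'[j]·conj(x̂'[i+j]) = x̂[i]·x̂[j]·conj(x̂[i+j])` agree for all `i, j`, then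
`x'` is a cyclic shift of `x`. -/
theorem bispectrum_separates_shift_orbits
    {N : ℕ} [NeZero N] (x x' : ZMod N → ℂ)
    (hnz : ∀ k : ZMod N, dft x k ≠ 0)
    (hb : ∀ i j : ZMod N,
      dft x' i * dft x' j * starRingEnd ℂ (dft x' (i + j)) =
        dft x i * dft x j * starRingEnd ℂ (dft x (i + j))) :
    ∃ k₀ : ZMod N, ∀ j : ZMod N, x' j = x (j + k₀) := by
  obtain ⟨ψ, hψ⟩ := exists_addChar_of_bispectrum_eq hnz (funext₂ hb)
  obtain ⟨k₀, rfl⟩ := exists_eq_mulShift_stdAddChar ψ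
  refine ⟨k₀, congrFun (dft.injective (funext fun k ↦ ?_))⟩
  rw [dft_comp_add_right, hψ, AddChar.mulShift_apply, smul_eq_mul]
end

section
/- Let N ≥ 1 and let y, y' : ZMod N → ℝ be real vectors such that ŷ[k] ≠ 0 for all k ∈ ZMod N. If ŷ'[i]·ŷ'[j]·ŷ'[−i−j] = ŷ[i]·ŷ[j]·ŷ[−i−j] for all i, j ∈ ZMod N, then there exists k₀ ∈ ZMod N such that y'_j = y_{j+k₀} for all j ∈ ZMod N. That is, the bispectrum of a real signal with nonvanishing Fourier coefficients determines the signal up to cyclic shift. -/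
open ZMod

private lemma dft_shift_aux {N : ℕ} [NeZero N] (y : ZMod N → ℝ) (m k : ZMod N) :
    dft (fun t => (y (t + m) : ℂ)) k = stdAddChar (m * k) * dft (fun t => (y t : ℂ)) k := by
  simp only [dft_apply, smul_eq_mul, Finset.mul_sum]
  refine Fintype.sum_equiv (Equiv.addRight m) _ _ fun t => ?_
  simp only [Equiv.coe_addRight]
  rw [← mul_assoc, ← AddChar.map_add_eq_mul]
  congr 2
  ring

/-- **The bispectrum of a real signal with nonvanishing Fourier coefficients determines
the signal up to cyclic shift.** Here the DFT of a real vector `y : ZMod N → ℝ` is the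
DFT of its complexification, and the bispectrum is `B(y)(i,j) = ŷ[i]·ŷ[j]·ŷ[-i-j]`. -/
theorem real_bispectrum_separates_shift_orbits
    {N : ℕ} [NeZero N] (y y' : ZMod N → ℝ)
    (hnz : ∀ k : ZMod N, dft (fun t => (y t : ℂ)) k ≠ 0)
    (hb : ∀ i j : ZMod N,
      dft (fun t => (y' t : ℂ)) i * dft (fun t => (y' t : ℂ)) j *
          dft (fun t => (y' t : ℂ)) (-i - j) =
        dft (fun t => (y t : ℂ)) i * dft (fun t => (y t : ℂ)) j *
          dft (fun t => (y t : ℂ)) (-i - j)) :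
    ∃ k₀ : ZMod N, ∀ j : ZMod N, y' j = y (j + k₀) := by
  set Y : ZMod N → ℂ := dft (fun t => (y t : ℂ)) with hYdef
  set Y' : ZMod N → ℂ := dft (fun t => (y' t : ℂ)) with hY'def
  -- zeroth coefficients are real and equal
  have hY0 : Y 0 = ((∑ t, y t : ℝ) : ℂ) := by
    rw [hYdef, dft_apply_zero]; push_cast; rfl
  have hY'0 : Y' 0 = ((∑ t, y' t : ℝ) : ℂ) := by
    rw [hY'def, dft_apply_zero]; push_cast; rfl
  have h00 : Y' 0 = Y 0 := by
    have h := hb 0 0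
    simp only [neg_zero, sub_zero] at h
    have h3 : (∑ t, y' t) ^ 3 = (∑ t, y t) ^ 3 := by
      have : ((∑ t, y' t : ℝ) : ℂ) ^ 3 = ((∑ t, y t : ℝ) : ℂ) ^ 3 := by
        rw [← hY0, ← hY'0]; linear_combination h
      exact_mod_cast this
    have hodd : Odd 3 := ⟨1, by norm_num⟩
    have := (hodd.strictMono_pow (R := ℝ)).injective h3
    rw [hY0, hY'0, this]
  -- Y' is nonvanishing
  have hY'nz : ∀ k, Y' k ≠ 0 := by
    intro k hk
    apply mul_ne_zero (mul_ne_zero (hnz k) (hnz 0)) (hnz (-k - 0))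
    rw [← hb k 0, hk, zero_mul, zero_mul]
  -- pair products agree
  have hpair : ∀ i, Y' i * Y' (-i) = Y i * Y (-i) := by
    intro i
    have h := hb i 0
    rw [sub_zero, h00] at h
    have h2 : Y 0 * (Y' i * Y' (-i)) = Y 0 * (Y i * Y (-i)) := by linear_combination h
    exact mul_left_cancel₀ (hnz 0) h2
  -- the ratio function
  set c : ZMod N → ℂ := fun k => Y' k / Y k with hcdef
  have hc0 : c 0 = 1 := by simp only [hcdef, h00, div_self (hnz 0)]
  have hcinv : ∀ i, c i * c (-i) = 1 := by
    intro i
    simp only [hcdef, div_mul_div_comm, hpair i]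
    exact div_self (mul_ne_zero (hnz i) (hnz (-i)))
  have hcadd : ∀ i j, c (i + j) = c i * c j := by
    intro i j
    have h := hb i j
    have hneg : -i - j = -(i + j) := by ring
    rw [hneg] at h
    have h1 : c i * c j * c (-(i + j)) = 1 := by
      simp only [hcdef, div_mul_div_comm, h]
      exact div_self (mul_ne_zero (mul_ne_zero (hnz i) (hnz j)) (hnz (-(i + j))))
    calc c (i + j) = c (i + j) * (c i * c j * c (-(i + j))) := by rw [h1, mul_one]
      _ = (c (i + j) * c (-(i + j))) * (c i * c j) := by ring
      _ = c i * c j := by rw [hcinv, one_mul]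
  have hpow : ∀ n : ℕ, c ((n : ZMod N)) = c 1 ^ n := by
    intro n
    induction n with
    | zero => simpa using hc0
    | succ n ih => push_cast; rw [hcadd, ih, pow_succ]
  have hval : ∀ k : ZMod N, c k = c 1 ^ k.val := by
    intro k
    conv_lhs => rw [← ZMod.natCast_zmod_val k]
    exact hpow k.val
  have hcN : c 1 ^ N = 1 := by
    rw [← hpow N, ZMod.natCast_self, hc0]
  obtain ⟨a, _, hae⟩ :=
    (Complex.isPrimitiveRoot_exp N (NeZero.ne N)).eq_pow_of_pow_eq_one hcN
  refine ⟨(a : ZMod N), fun j => ?_⟩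
  -- the standard character at a matches c 1
  have hchar1 : stdAddChar ((a : ZMod N)) = c 1 := by
    rw [show ((a : ZMod N)) = ((a : ℤ) : ZMod N) by push_cast; rfl, stdAddChar_coe, ← hae,
      ← Complex.exp_nat_mul]
    congr 1
    push_cast
    ring
  have hchar : ∀ k, stdAddChar ((a : ZMod N) * k) = c k := by
    intro k
    have : (a : ZMod N) * k = k.val • (a : ZMod N) := by
      rw [nsmul_eq_mul, ZMod.natCast_zmod_val, mul_comm]
    rw [this, AddChar.map_nsmul_eq_pow, hchar1, ← hval k]
  -- Y' is the DFT of the shifted signal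
  have hdfteq : dft (fun t => (y' t : ℂ)) = dft (fun t => (y (t + (a : ZMod N)) : ℂ)) := by
    funext k
    rw [dft_shift_aux, hchar, ← hYdef, ← hY'def, hcdef]
    rw [div_mul_cancel₀ _ (hnz k)]
  have := ZMod.dft.injective hdfteq
  have := congrFun this j
  exact_mod_cast this
end

section
/- Let N ≥ 1. The set of vectors x : ZMod N → ℂ such that ŷ[k] ≠ 0 and ẑ[k] ≠ 0 for all k ∈ ZMod N — where y_j = |x_j|² and z_k = |x̂[k]|² — is open and dense in ℂ^N. That is, for generic x ∈ ℂ^N, both the vector of squared magnitudes and the vector of squared Fourier magnitudes have nonvanishing discrete Fourier transform. -/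
/-!
Both conditions say that finitely many real-analytic functions of `x` (real quadratic forms in
the coordinates of `x`) are nonzero, so by the identity theorem each nonvanishing locus is open
and dense as soon as it is nonempty. The Dirac vector `δ₀` has `|δ₀|² = δ₀` with constant DFT
`1`, and its preimage under the DFT witnesses the Fourier-side condition.
-/

open ZMod Set

section AnalyticZeroSet

variable {𝕜 E F : Type*} [NontriviallyNormedField 𝕜] [NormedAddCommGroup E] [NormedSpace 𝕜 E]
  [PreconnectedSpace E] [NormedAddCommGroup F] [NormedSpace 𝕜 F]

theorem AnalyticOnNhd.dense_setOf_ne_zero {f : E → F} (hf : AnalyticOnNhd 𝕜 f univ) {w : E}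
    (hw : f w ≠ 0) : Dense {x | f x ≠ 0} := by
  rw [← compl_ofPred, ← interior_eq_empty_iff_dense_compl, eq_empty_iff_forall_notMem]
  intro z hz
  have hf_zero : f = 0 :=
    hf.eq_of_eventuallyEq analyticOnNhd_const (mem_interior_iff_mem_nhds.mp hz)
  exact hw (congrFun hf_zero w)

theorem isOpen_and_dense_setOf_forall_ne_zero {ι : Type*} [Finite ι] {f : ι → E → F}
    (hf : ∀ i, AnalyticOnNhd 𝕜 (f i) univ) (hw : ∀ i, ∃ w, f i w ≠ 0) :
    IsOpen {x | ∀ i, f i x ≠ 0} ∧ Dense {x | ∀ i, f i x ≠ 0} := by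
  have hopen (i : ι) : IsOpen {x | f i x ≠ 0} := isOpen_ne_fun (hf i).continuous continuous_const
  rw [ofPred_forall, ← sInter_range]
  refine ⟨(finite_range _).isOpen_sInter (forall_mem_range.mpr hopen),
    (finite_range _).dense_sInter (forall_mem_range.mpr hopen) (forall_mem_range.mpr fun i => ?_)⟩
  obtain ⟨w, hw⟩ := hw i
  exact (hf i).dense_setOf_ne_zero hw

end AnalyticZeroSet

namespace ZMod

variable {N : ℕ} [NeZero N]

theorem dft_single_zero {E : Type*} [AddCommGroup E] [Module ℂ E] (c : E) :
    dft (Pi.single 0 c : ZMod N → E) = fun _ => c := by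
  ext k
  simp [dft_apply, Pi.single_apply]

theorem analyticOnNhd_dft : AnalyticOnNhd ℝ (dft : (ZMod N → ℂ) → ZMod N → ℂ) univ :=
  (LinearMap.toContinuousLinearMap
    ((dft : (ZMod N → ℂ) ≃ₗ[ℂ] _).toLinearMap.restrictScalars ℝ)).analyticOnNhd univ

theorem analyticOnNhd_dft_sq_norm_apply (k : ZMod N) :
    AnalyticOnNhd ℝ (fun x : ZMod N → ℂ => dft (fun t => (‖x t‖ : ℂ) ^ 2) k) univ := by
  have hsq : AnalyticOnNhd ℝ (fun (x : ZMod N → ℂ) t => (‖x t‖ : ℂ) ^ 2) univ :=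
    AnalyticOnNhd.pi fun t => by
      simp_rw [← Complex.conj_mul']
      let evalₜ : (ZMod N → ℂ) →L[ℝ] ℂ := ContinuousLinearMap.proj t
      exact ((Complex.conjCLE.toContinuousLinearMap.comp evalₜ).analyticOnNhd univ).mul
        (evalₜ.analyticOnNhd univ)
  exact analyticOnNhd_pi_iff.mp (analyticOnNhd_dft.comp hsq (mapsTo_univ _ _)) k

theorem dft_sq_norm_single_zero (k : ZMod N) :
    dft (fun t => (‖(Pi.single 0 1 : ZMod N → ℂ) t‖ : ℂ) ^ 2) k = 1 := by
  have hsq : (fun t => (‖(Pi.single 0 1 : ZMod N → ℂ) t‖ : ℂ) ^ 2) = Pi.single 0 1 := by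
    ext t
    by_cases ht : t = 0 <;> simp [ht]
  rw [hsq, dft_single_zero]

end ZMod

/-- **Genericity of nonvanishing bispectral data.** The set of `x : ZMod N → ℂ` such
that both the DFT of the squared magnitudes `y_j = |x_j|²` and the DFT of the squared
Fourier magnitudes `z_k = |x̂[k]|²` are everywhere nonvanishing is open and dense in
`ℂ^N` (with its standard topology). -/
theorem generic_nonvanishing_bispectral_data {N : ℕ} [NeZero N] :
    IsOpen {x : ZMod N → ℂ |
        (∀ k : ZMod N, dft (fun t => ((‖x t‖ : ℂ)) ^ 2) k ≠ 0) ∧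
        (∀ k : ZMod N, dft (fun t => ((‖dft x t‖ : ℂ)) ^ 2) k ≠ 0)} ∧
      Dense {x : ZMod N → ℂ |
        (∀ k : ZMod N, dft (fun t => ((‖x t‖ : ℂ)) ^ 2) k ≠ 0) ∧
        (∀ k : ZMod N, dft (fun t => ((‖dft x t‖ : ℂ)) ^ 2) k ≠ 0)} := by
  obtain ⟨hY_open, hY_dense⟩ := isOpen_and_dense_setOf_forall_ne_zero
    (analyticOnNhd_dft_sq_norm_apply (N := N))
    fun k => ⟨Pi.single 0 1, by simp [dft_sq_norm_single_zero]⟩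
  obtain ⟨hZ_open, hZ_dense⟩ := isOpen_and_dense_setOf_forall_ne_zero
    (fun k => (analyticOnNhd_dft_sq_norm_apply (N := N) k).comp analyticOnNhd_dft
      (mapsTo_univ _ _))
    fun k => ⟨dft.symm (Pi.single 0 1), by simp [dft_sq_norm_single_zero]⟩
  rw [ofPred_and]
  exact ⟨hY_open.inter hZ_open, hY_dense.inter_of_isOpen_left hZ_dense hY_open⟩
end
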